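/- Two-layered convolutional neural networks with 3-wide kernels are not universal for d = 3: for a compact domain K ⊂ R^{c×3} containing an open neighborhood of the origin, the closure of Σ_{c,c'}^2 in the uniform norm is a proper subset of C(K, R^{c'×3}). In particular, the function g(x₁,x₂,x₃) = (x₂, 0, 0) (acting in a single channel) cannot be uniformly approximated, because any network f = C₂ ∘ σ ∘ C₁ satisfies that f₁(x,y,0) - f₂(0,x,y) is a function of x alone. -/

import Mathlib

/-!
In a two-layer network `f = C₂ ∘ σ ∘ C₁` with kernels of width 3 on `d = 3` positions, shifting
an input `(a, b, 0)` to `(0, a, b)` shifts hidden positions 0, 1 to positions 1, 2. So output 0 of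
the first input and output 1 of the second read the same hidden values, except that the latter
also sees hidden position 0 of `(0, a, b)`, which depends on `a` alone. Hence
`f(a, b, 0)₀ - f(0, a, b)₁` is a function of `a`, whereas for the target
`g(x₁, x₂, x₃) = (x₂, 0, 0)` this difference is `b`; testing `a = 0`, `b = ±ε₀/2` inside the ball
rules out uniform `ε₀/8`-approximation.
-/

/-- Zero-extension of a finite vector to an integer-indexed sequence. -/
def zpad (d : ℕ) (x : Fin d → ℝ) (m : ℤ) : ℝ :=
  if h : 0 ≤ m ∧ m < (d : ℤ) then x ⟨m.toNat, by omega⟩ else 0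

/-- Zero padding convolution with kernel `w` supported on `[-k, k]`. -/
noncomputable def zconv (d k : ℕ) (w : ℤ → ℝ) (x : Fin d → ℝ) (i : Fin d) : ℝ :=
  ∑ j ∈ Finset.Icc (-(k : ℤ)) (k : ℤ), w j * zpad d x ((i : ℤ) + j)

/-- A zero-padding convolutional layer with kernel size 3 (`k = 1`). -/
def IsConvLayer3 (d c₁ c₂ : ℕ)
    (C : (Fin c₁ → Fin d → ℝ) → (Fin c₂ → Fin d → ℝ)) : Prop :=
  ∃ (w : Fin c₂ → Fin c₁ → ℤ → ℝ) (δ : Fin c₂ → ℝ),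
    ∀ x i p, C x i p = (∑ j, zconv d 1 (w i j) (x j) p) + δ i

/-- `f ∈ Σ_{c,c'}^N` with three-kernel zero-padding convolutional layers. -/
def InSigma3 (σ : ℝ → ℝ) (d : ℕ) :
    (N : ℕ) → (c c' : ℕ) → ((Fin c → Fin d → ℝ) → (Fin c' → Fin d → ℝ)) → Prop
  | 0, _, _, _ => False
  | 1, c, c', f => IsConvLayer3 d c c' f
  | (N + 2), c, c', f =>
      ∃ c₁ C, IsConvLayer3 d c c₁ C ∧
        ∃ g, InSigma3 σ d (N + 1) c₁ c' g ∧ ∀ x, f x = g (fun i p => σ (C x i p))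

open Matrix

theorem zconv_one_apply (d : ℕ) (w : ℤ → ℝ) (x : Fin d → ℝ) (p : Fin d) :
    zconv d 1 w x p =
      w (-1) * zpad d x (p - 1) + w 0 * zpad d x p + w 1 * zpad d x (p + 1) := by
  rw [zconv, Nat.cast_one, show Finset.Icc (-1 : ℤ) 1 = {-1, 0, 1} by decide,
    Finset.sum_insert (by decide), Finset.sum_insert (by decide), Finset.sum_singleton,
    ← sub_eq_add_neg, add_zero, add_assoc]

theorem zconv_three_zero (w : ℤ → ℝ) (s : Fin 3 → ℝ) :
    zconv 3 1 w s 0 = w 0 * s 0 + w 1 * s 1 := by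
  simp [zconv_one_apply, zpad]

theorem zconv_three_one (w : ℤ → ℝ) (s : Fin 3 → ℝ) :
    zconv 3 1 w s 1 = w (-1) * s 0 + w 0 * s 1 + w 1 * s 2 := by
  simp [zconv_one_apply, zpad]

theorem zconv_three_two (w : ℤ → ℝ) (s : Fin 3 → ℝ) :
    zconv 3 1 w s 2 = w (-1) * s 1 + w 0 * s 2 := by
  simp [zconv_one_apply, zpad]

theorem InSigma3.sub_shift_factors_through_fst {σ : ℝ → ℝ} {c c' : ℕ}
    {f : (Fin c → Fin 3 → ℝ) → (Fin c' → Fin 3 → ℝ)} (hf : InSigma3 σ 3 2 c c' f) :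
    ∃ φ : (Fin c → ℝ) → Fin c' → ℝ, ∀ (a b : Fin c → ℝ) i,
      f (fun j => ![a j, b j, 0]) i 0 - f (fun j => ![0, a j, b j]) i 1 = φ a i := by
  obtain ⟨c₁, C, ⟨w, δ, hC⟩, g, ⟨W, Δ, hg⟩, hfg⟩ := hf
  refine ⟨fun a i => -∑ m, W i m (-1) * σ ((∑ j, w m j 1 * a j) + δ m), fun a b i => ?_⟩
  simp only [hfg, hg, hC, zconv_three_zero, zconv_three_one, zconv_three_two, cons_val_zero,
    cons_val_one, cons_val_two, head_cons, tail_cons, mul_zero, zero_add, add_zero]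
  rw [Finset.sum_add_distrib, Finset.sum_add_distrib, Finset.sum_add_distrib]
  ring

theorem abs_apply_apply_sub_le_of_dist_le {ι κ : Type*} [Fintype ι] [Fintype κ]
    {F G : ι → κ → ℝ} {ε : ℝ} (h : dist F G ≤ ε) (i : ι) (k : κ) :
    |F i k - G i k| ≤ ε := by
  simpa [Real.dist_eq] using (dist_le_pi_dist _ _ k).trans ((dist_le_pi_dist F G i).trans h)

theorem const_mem_ball_zero {ι κ : Type*} [Fintype ι] [Fintype κ] {v : κ → ℝ} {r : ℝ}
    (hr : 0 < r) (hv : ∀ k, |v k| < r) : (fun _ : ι => v) ∈ Metric.ball 0 r :=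
  mem_ball_zero_iff.2 <| (pi_norm_lt_iff hr).2 fun _ => (pi_norm_lt_iff hr).2 hv

theorem two_layer_not_universal_d3_general (σ : ℝ → ℝ) (c c' : ℕ)
    (hc : 0 < c) (hc' : 0 < c') (K : Set (Fin c → Fin 3 → ℝ))
    (ε₀ : ℝ) (hε₀ : 0 < ε₀) (hball : Metric.ball 0 ε₀ ⊆ K) :
    ∃ g : (Fin c → Fin 3 → ℝ) → (Fin c' → Fin 3 → ℝ),
      g = (fun x i p => if i = (⟨0, hc'⟩ : Fin c') ∧ p = (0 : Fin 3)
            then x ⟨0, hc⟩ 1 else 0) ∧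
      Continuous g ∧
      ¬ (∀ ε > 0, ∃ f, InSigma3 σ 3 2 c c' f ∧ ∀ x ∈ K, dist (f x) (g x) ≤ ε) := by
  refine ⟨_, rfl, ?_, fun happrox => ?_⟩
  · refine continuous_pi fun i => continuous_pi fun p => ?_
    split_ifs
    exacts [(continuous_apply 1).comp (continuous_apply _), continuous_const]
  obtain ⟨f, hf, hfK⟩ := happrox (ε₀ / 8) (by positivity)
  obtain ⟨φ, hφ⟩ := hf.sub_shift_factors_through_fst
  have hφt : ∀ t : ℝ, |t| < ε₀ → |t - φ 0 ⟨0, hc'⟩| ≤ ε₀ / 4 := by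
    intro t ht
    have hbound : ∀ p, |(![0, t, 0] : Fin 3 → ℝ) p| < ε₀ ∧ |(![0, 0, t] : Fin 3 → ℝ) p| < ε₀ := by
      intro p
      fin_cases p <;> simp [ht, hε₀]
    have hu := abs_apply_apply_sub_le_of_dist_le
      (hfK _ (hball (const_mem_ball_zero hε₀ fun p => (hbound p).1))) ⟨0, hc'⟩ 0
    have hv := abs_apply_apply_sub_le_of_dist_le
      (hfK _ (hball (const_mem_ball_zero hε₀ fun p => (hbound p).2))) ⟨0, hc'⟩ 1
    have h := hφ 0 (fun _ => t) ⟨0, hc'⟩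
    simp only [Fin.isValue, and_true, ↓reduceIte, cons_val_one, cons_val_zero,
      one_ne_zero, and_false, sub_zero, Pi.zero_apply] at hu hv h
    rw [← h, abs_le]
    rw [abs_le] at hu hv
    constructor <;> linarith
  have hpos := hφt (ε₀ / 2) (by rw [abs_of_pos (by positivity)]; linarith)
  have hneg := hφt (-(ε₀ / 2)) (by rw [abs_neg, abs_of_pos (by positivity)]; linarith)
  rw [abs_le] at hpos hneg
  linarith

/-- Two-layered three-kernel CNNs are not universal for `d = 3`: on a compact
domain `K ⊆ ℝ^{c×3}` containing an open ball around the origin, there is a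
continuous target—in particular `g(x₁,x₂,x₃) = (x₂,0,0)` in the first channel—
that cannot be uniformly approximated by elements of `Σ_{c,c'}^2`. -/
theorem two_layer_not_universal_d3 (σ : ℝ → ℝ) (hσ : Continuous σ) (c c' : ℕ)
    (hc : 0 < c) (hc' : 0 < c') (K : Set (Fin c → Fin 3 → ℝ)) (hK : IsCompact K)
    (ε₀ : ℝ) (hε₀ : 0 < ε₀) (hball : Metric.ball 0 ε₀ ⊆ K) :
    ∃ g : (Fin c → Fin 3 → ℝ) → (Fin c' → Fin 3 → ℝ),
      g = (fun x i p => if i = (⟨0, hc'⟩ : Fin c') ∧ p = (0 : Fin 3)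
            then x ⟨0, hc⟩ 1 else 0) ∧
      Continuous g ∧
      ¬ (∀ ε > 0, ∃ f, InSigma3 σ 3 2 c c' f ∧ ∀ x ∈ K, dist (f x) (g x) ≤ ε) :=
  two_layer_not_universal_d3_general σ c c' hc hc' K ε₀ hε₀ hball
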